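/- arXiv:1511.07899 — 3 statements merged into one kernel-verified Lean document; each statement's English description precedes it below -/
import Mathlib

section
/- Let g be a real Lie algebra with an invariant inner product Q, a ⊆ g an abelian Lie subalgebra with orthogonal complement n = a^⊥, and write X = X_a + X_n. Fix t ∈ ℝ, t ≠ 1, let B̄ be the symmetric bilinear form on g × a given by B̄((u,p),(v,q)) = Q(u,v) + (t/(1−t))Q(p,q), let X̄ = (X_n + tX_a, (t−1)X_a), and let Δ = {(p,p) : p ∈ a}. Regard g × a as the product Lie algebra (with a abelian). Then for all X,Y ∈ g: (i) [X̄,Ȳ] = ([X_n + tX_a, Y_n + tY_a], 0); (ii) the unique element v ∈ Δ such that [X̄,Ȳ] − v is B̄-orthogonal to Δ is v = ((1−t)[X_n,Y_n]_a, (1−t)[X_n,Y_n]_a); and (iii) setting A(X,Y) := (1/2)(1−t)·([X_n,Y_n]_a, [X_n,Y_n]_a), one has B̄(A(X,Y), A(Z,W)) = ((1−t)/4)·Q([X_n,Y_n]_a, [Z_n,W_n]_a) for all X,Y,Z,W ∈ g. (This computes the Gray–O'Neill A-tensor of the semi-Riemannian submersion π(g,a) = a⁻¹g and establishes the formula ⟨α(X̄∧Ȳ),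 Z̄∧W̄⟩ = ((1−t)/4)Q([X_n,Y_n]_a,[Z_n,W_n]_a).) -/
/-! Invariance of `Q` makes `[a, g]` orthogonal to the abelian subalgebra `a`
(`Q([X,p],q) = Q(X,[p,q]) = 0`), so the `a`-component of `[X_n + tX_a, Y_n + tY_a]` is
`[X_n,Y_n]_a`. On the diagonal `Δ` the form `B̄` is `(1−t)⁻¹ Q`, which turns the
orthogonality condition of (ii) into `Q((1−t)[X_n,Y_n]_a − p, ·) = 0` on `a`, and (iii) into
`(1−t)²/4 · (1 + t/(1−t)) = (1−t)/4`. -/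

open RealInnerProductSpace

attribute [-instance] LieRing.toAddCommGroup

variable {g : Type*} [LieRing g] [NormedAddCommGroup g] [InnerProductSpace ℝ g]
  [FiniteDimensional ℝ g]

/-- The component `X_a` of `X` in the orthogonal decomposition `X = X_a + X_n`
determined by the subspace `a` (so that `X_n = X - X_a`). -/
noncomputable def compA (a : Submodule ℝ g) (X : g) : g :=
  (Submodule.orthogonalProjectionOnto a X : g)

/-- The (possibly indefinite) symmetric bilinear form
`B̄((u,p),(v,q)) = Q(u,v) + (t/(1−t))·Q(p,q)` on `g × a`. -/
noncomputable def Bbar (a : Submodule ℝ g) (t : ℝ) (x y : g × a) : ℝ :=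
  ⟪x.1, y.1⟫ + (t / (1 - t)) * ⟪(x.2 : g), (y.2 : g)⟫

/-- The lift `X̄ = (X_n + t·X_a, (t−1)·X_a) ∈ g × a`. -/
noncomputable def hlift (a : Submodule ℝ g) (t : ℝ) (X : g) : g × a :=
  ((X - compA a X) + t • compA a X, (t - 1) • Submodule.orthogonalProjectionOnto a X)

def bracketProd (a : Submodule ℝ g) (hsub : ∀ x y : g, x ∈ a → y ∈ a → ⁅x, y⁆ ∈ a)
    (x y : g × a) : g × a :=
  (⁅x.1, y.1⁆, ⟨⁅(x.2 : g), (y.2 : g)⁆, hsub _ _ x.2.2 y.2.2⟩)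

/-- The Gray–O'Neill `A`-tensor
`A(X,Y) = (1/2)(1−t)·([X_n,Y_n]_a, [X_n,Y_n]_a) ∈ g × a`. -/
noncomputable def Atensor (a : Submodule ℝ g) (t : ℝ) (X Y : g) : g × a :=
  ((1/2) * (1 - t)) • ((compA a ⁅X - compA a X, Y - compA a Y⁆ : g),
    Submodule.orthogonalProjectionOnto a ⁅X - compA a X, Y - compA a Y⁆)

section InnerProductSpace

variable {E : Type*} [NormedAddCommGroup E] [InnerProductSpace ℝ E] {a : Submodule ℝ E} {t : ℝ}

theorem forall_inner_eq_zero_iff (v : E) : (∀ w : E, ⟪v, w⟫ = 0) ↔ v = 0 :=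
  ⟨fun h => inner_self_eq_zero.1 (h v), fun h w => by rw [h, inner_zero_left]⟩

theorem Bbar_smul_diag_smul_diag (ht : t ≠ 1) (c : ℝ) (p q : a) :
    Bbar a t (c • ((p : E), p)) (c • ((q : E), q)) = c ^ 2 / (1 - t) * ⟪(p : E), q⟫ := by
  have h1t : 1 - t ≠ 0 := sub_ne_zero.2 ht.symm
  simp only [Bbar, Prod.smul_fst, Prod.smul_snd, Submodule.coe_smul, real_inner_smul_left,
    real_inner_smul_right]
  field_simp
  ring

theorem Bbar_sub_diag_diag [a.HasOrthogonalProjection] (ht : t ≠ 1) (u : E) (p q : a) :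
    Bbar a t ((u, 0) - ((p : E), p)) ((q : E), q) =
      (1 - t)⁻¹ * ⟪(1 - t) • a.orthogonalProjectionOnto u - p, q⟫ := by
  have h1t : 1 - t ≠ 0 := sub_ne_zero.2 ht.symm
  rw [inner_sub_left, real_inner_smul_left,
    Submodule.inner_orthogonalProjectionOnto_eq_of_mem_right, Submodule.coe_inner]
  simp only [Bbar, Prod.fst_sub, Prod.snd_sub, zero_sub, Submodule.coe_neg, inner_sub_left,
    inner_neg_left]
  field_simp
  ring

end InnerProductSpace

section InvariantInnerProduct

variable {L : Type*} [LieRing L] [NormedAddCommGroup L] [InnerProductSpace ℝ L]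
  {a : Submodule ℝ L}

/- The Lie ring carries its own additive structure, unrelated to that of the inner product
space; additivity of the bracket for the latter comes from invariance and nondegeneracy. -/
theorem add_lie_of_inner_invariant (hinv : ∀ X Y Z : L, ⟪⁅X, Y⁆, Z⟫ = ⟪X, ⁅Y, Z⁆⟫)
    (A B C : L) : ⁅A + B, C⁆ = ⁅A, C⁆ + ⁅B, C⁆ :=
  ext_inner_right ℝ fun Z => by rw [hinv, inner_add_left, inner_add_left, hinv, hinv]

theorem lie_add_of_inner_invariant (hinv : ∀ X Y Z : L, ⟪⁅X, Y⁆, Z⟫ = ⟪X, ⁅Y, Z⁆⟫)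
    (A B C : L) : ⁅A, B + C⁆ = ⁅A, B⁆ + ⁅A, C⁆ :=
  ext_inner_right ℝ fun Z => by
    rw [hinv, add_lie_of_inner_invariant hinv, inner_add_right, inner_add_left, hinv, hinv]

theorem lie_mem_orthogonal_of_mem_right (hinv : ∀ X Y Z : L, ⟪⁅X, Y⁆, Z⟫ = ⟪X, ⁅Y, Z⁆⟫)
    (habelian : ∀ x y : L, x ∈ a → y ∈ a → ⁅x, y⁆ = 0) (U : L) {R : L} (hR : R ∈ a) :
    ⁅U, R⁆ ∈ aᗮ := fun q hq => by
  rw [real_inner_comm, hinv, habelian R q hR hq, inner_zero_right]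

theorem lie_mem_orthogonal_of_mem_left (hinv : ∀ X Y Z : L, ⟪⁅X, Y⁆, Z⟫ = ⟪X, ⁅Y, Z⁆⟫)
    (habelian : ∀ x y : L, x ∈ a → y ∈ a → ⁅x, y⁆ = 0) {P : L} (hP : P ∈ a) (V : L) :
    ⁅P, V⁆ ∈ aᗮ := fun q hq => by
  rw [← hinv, habelian q P hq hP, inner_zero_left]

theorem orthogonalProjectionOnto_lie_add_of_mem [a.HasOrthogonalProjection]
    (hinv : ∀ X Y Z : L, ⟪⁅X, Y⁆, Z⟫ = ⟪X, ⁅Y, Z⁆⟫)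
    (habelian : ∀ x y : L, x ∈ a → y ∈ a → ⁅x, y⁆ = 0) (U V : L) {P R : L} (hP : P ∈ a)
    (hR : R ∈ a) :
    a.orthogonalProjectionOnto ⁅U + P, V + R⁆ = a.orthogonalProjectionOnto ⁅U, V⁆ := by
  rw [add_lie_of_inner_invariant hinv, lie_add_of_inner_invariant hinv,
    lie_add_of_inner_invariant hinv, habelian P R hP hR, map_add, map_add, map_add,
    Submodule.orthogonalProjectionOnto_eq_zero_iff.2
      (lie_mem_orthogonal_of_mem_right hinv habelian U hR),
    Submodule.orthogonalProjectionOnto_eq_zero_iff.2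
      (lie_mem_orthogonal_of_mem_left hinv habelian hP V),
    map_zero, add_zero, add_zero, add_zero]

end InvariantInnerProduct

theorem Atensor_of_backwards_cheeger_general
    (hinv : ∀ X Y Z : g, ⟪⁅X, Y⁆, Z⟫ = ⟪X, ⁅Y, Z⁆⟫)
    (a : Submodule ℝ g) (hsub : ∀ x y : g, x ∈ a → y ∈ a → ⁅x, y⁆ ∈ a)
    (habelian : ∀ x y : g, x ∈ a → y ∈ a → ⁅x, y⁆ = 0)
    (t : ℝ) (ht : t ≠ 1) :
    (∀ X Y : g, bracketProd a hsub (hlift a t X) (hlift a t Y) =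
      (⁅(X - compA a X) + t • compA a X, (Y - compA a Y) + t • compA a Y⁆, 0)) ∧
    (∀ X Y : g, ∀ p : a,
      ((∀ q : a, Bbar a t
          (bracketProd a hsub (hlift a t X) (hlift a t Y) - ((p : g), p)) ((q : g), q) = 0)
        ↔ p = (1 - t) • Submodule.orthogonalProjectionOnto a ⁅X - compA a X, Y - compA a Y⁆)) ∧
    (∀ X Y Z W : g, Bbar a t (Atensor a t X Y) (Atensor a t Z W) =
      ((1 - t) / 4) * ⟪compA a ⁅X - compA a X, Y - compA a Y⁆,
        compA a ⁅Z - compA a Z, W - compA a W⁆⟫) := by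
  have hlift_lie (X Y : g) : bracketProd a hsub (hlift a t X) (hlift a t Y) =
      (⁅(X - compA a X) + t • compA a X, (Y - compA a Y) + t • compA a Y⁆, 0) :=
    Prod.ext rfl (Subtype.ext (habelian _ _ (Submodule.coe_mem _) (Submodule.coe_mem _)))
  refine ⟨hlift_lie, fun X Y p => ?_, fun X Y Z W => ?_⟩
  · have hproj : a.orthogonalProjectionOnto
          ⁅(X - compA a X) + t • compA a X, (Y - compA a Y) + t • compA a Y⁆ =
        a.orthogonalProjectionOnto ⁅X - compA a X, Y - compA a Y⁆ :=
      orthogonalProjectionOnto_lie_add_of_mem hinv habelian _ _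
        (a.smul_mem t (a.orthogonalProjectionOnto X).2)
        (a.smul_mem t (a.orthogonalProjectionOnto Y).2)
    simp_rw [hlift_lie, Bbar_sub_diag_diag ht, hproj, mul_eq_zero, inv_eq_zero,
      sub_ne_zero.2 ht.symm, false_or, forall_inner_eq_zero_iff, sub_eq_zero, eq_comm]
  · simp only [Atensor, compA]
    rw [Bbar_smul_diag_smul_diag ht]
    field_simp
    ring

/-- computation of the Gray–O'Neill `A`-tensor of the semi-Riemannian
submersion `π(g,a) = a⁻¹g`: (i) the bracket of two lifts is
`([X_n + tX_a, Y_n + tY_a], 0)`; (ii) its `B̄`-orthogonal projection onto the diagonal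
`Δ = {(p,p) : p ∈ a}` is the unique `v = ((1−t)[X_n,Y_n]_a, (1−t)[X_n,Y_n]_a)`;
(iii) `B̄(A(X,Y), A(Z,W)) = ((1−t)/4)·Q([X_n,Y_n]_a, [Z_n,W_n]_a)`. -/
theorem Atensor_of_backwards_cheeger
    (hsmul : ∀ (c : ℝ) (X Y : g), ⁅c • X, Y⁆ = c • ⁅X, Y⁆)
    (hinv : ∀ X Y Z : g, ⟪⁅X, Y⁆, Z⟫ = ⟪X, ⁅Y, Z⁆⟫)
    (a : Submodule ℝ g) (hsub : ∀ x y : g, x ∈ a → y ∈ a → ⁅x, y⁆ ∈ a)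
    (habelian : ∀ x y : g, x ∈ a → y ∈ a → ⁅x, y⁆ = 0)
    (t : ℝ) (ht : t ≠ 1) :
    (∀ X Y : g, bracketProd a hsub (hlift a t X) (hlift a t Y) =
      (⁅(X - compA a X) + t • compA a X, (Y - compA a Y) + t • compA a Y⁆, 0)) ∧
    (∀ X Y : g, ∀ p : a,
      ((∀ q : a, Bbar a t
          (bracketProd a hsub (hlift a t X) (hlift a t Y) - ((p : g), p)) ((q : g), q) = 0)
        ↔ p = (1 - t) • Submodule.orthogonalProjectionOnto a ⁅X - compA a X, Y - compA a Y⁆)) ∧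
    (∀ X Y Z W : g, Bbar a t (Atensor a t X Y) (Atensor a t Z W) =
      ((1 - t) / 4) * ⟪compA a ⁅X - compA a X, Y - compA a Y⁆,
        compA a ⁅Z - compA a Z, W - compA a W⁆⟫) :=
  Atensor_of_backwards_cheeger_general hinv a hsub habelian t ht
end

section
/- Let V be a real vector space and H ⊆ V a subspace. Suppose R̄ is a quadrilinear form on V with curvature symmetries and ω̄ is an alternating quadrilinear form on V such that R̄ + ω̄ is positive semidefinite on ∧²V. Let α be a quadrilinear form on H with curvature symmetries that is positive semidefinite on ∧²H, and let b denote the Bianchi map. Define quadrilinear forms on H by R = R̄|_H + 3α − 3b(α) and ω = ω̄|_H + 3b(α), where |_H denotes restriction of all arguments to H. Then ω is an alternating quadrilinear form on H and R + ω is positive semidefinite on ∧²H. (Via the Gray–O'Neill formula, in which R is the curvature of the base of a Riemannian submersion, R̄ the curvature of the total space restricted to the horizontal space H, and α = A*A for the A-tensor, this shows that Riemannian submersions preserve strongly nonnegative curvature.) -/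
/-- A quadrilinear form: linear in each of the four arguments. -/
def IsQuadrilinear {V : Type*} [AddCommGroup V] [Module ℝ V]
    (T : V → V → V → V → ℝ) : Prop :=
  (∀ x x' y z w, T (x + x') y z w = T x y z w + T x' y z w) ∧
  (∀ (c : ℝ) x y z w, T (c • x) y z w = c * T x y z w) ∧
  (∀ x y y' z w, T x (y + y') z w = T x y z w + T x y' z w) ∧
  (∀ (c : ℝ) x y z w, T x (c • y) z w = c * T x y z w) ∧
  (∀ x y z z' w, T x y (z + z') w = T x y z w + T x y z' w) ∧
  (∀ (c : ℝ) x y z w, T x y (c • z) w = c * T x y z w) ∧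
  (∀ x y z w w', T x y z (w + w') = T x y z w + T x y z w') ∧
  (∀ (c : ℝ) x y z w, T x y z (c • w) = c * T x y z w)

/-- Curvature symmetries: antisymmetry in the first pair and symmetry under
exchange of the two pairs (such forms correspond to symmetric operators on `∧²V`). -/
def HasCurvatureSymmetries {V : Type*} (T : V → V → V → V → ℝ) : Prop :=
  (∀ x y z w, T x y z w = - T y x z w) ∧ (∀ x y z w, T x y z w = T z w x y)

/-- An alternating quadrilinear form (a 4-form): it vanishes whenever two arguments coincide. -/
def IsAlternating4 {V : Type*} (ω : V → V → V → V → ℝ) : Prop :=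
  ∀ x₁ x₂ x₃ x₄, (x₁ = x₂ ∨ x₁ = x₃ ∨ x₁ = x₄ ∨ x₂ = x₃ ∨ x₂ = x₄ ∨ x₃ = x₄) →
    ω x₁ x₂ x₃ x₄ = 0

/-- The Bianchi map. -/
noncomputable def bianchi {V : Type*} (T : V → V → V → V → ℝ) : V → V → V → V → ℝ :=
  fun x y z w => (1/3) * (T x y z w + T y z x w + T z x y w)

/-- Positive semidefiniteness on `∧²V` of a quadrilinear form with curvature symmetries. -/
def PosSemidefWedge {V : Type*} (T : V → V → V → V → ℝ) : Prop :=
  ∀ (m : ℕ) (X Y : Fin m → V), 0 ≤ ∑ i, ∑ j, T (X i) (Y i) (X j) (Y j)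

/-- Gray–O'Neill: Riemannian submersions preserve strongly nonnegative
curvature: if `R̄ + ω̄` is positive semidefinite on `∧²V` and `α` is a positive
semidefinite curvature-symmetric form on a subspace `H ⊆ V` (the horizontal space,
with `α = A*A`), then `ω = ω̄|_H + 3b(α)` is alternating and
`R + ω = (R̄|_H + 3α − 3b(α)) + (ω̄|_H + 3b(α))` is positive semidefinite on `∧²H`. -/
theorem submersion_preserves_strongly_nonneg
    {V : Type*} [AddCommGroup V] [Module ℝ V] (H : Submodule ℝ V)
    (Rbar ωbar : V → V → V → V → ℝ)
    (hRquad : IsQuadrilinear Rbar) (hRsym : HasCurvatureSymmetries Rbar)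
    (hωquad : IsQuadrilinear ωbar) (hωalt : IsAlternating4 ωbar)
    (hpsd : PosSemidefWedge (fun x y z w => Rbar x y z w + ωbar x y z w))
    (α : H → H → H → H → ℝ)
    (hαquad : IsQuadrilinear α) (hαsym : HasCurvatureSymmetries α)
    (hαpsd : PosSemidefWedge α) :
    IsAlternating4 (fun x y z w : H =>
      ωbar (x : V) (y : V) (z : V) (w : V) + 3 * bianchi α x y z w) ∧
    PosSemidefWedge (fun x y z w : H =>
      (Rbar (x : V) (y : V) (z : V) (w : V) + 3 * α x y z w - 3 * bianchi α x y z w)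
      + (ωbar (x : V) (y : V) (z : V) (w : V) + 3 * bianchi α x y z w)) := by
  obtain ⟨ha1, ha2⟩ := hαsym
  -- antisymmetry in the second pair
  have ha3 : ∀ x y z w, α x y z w = - α x y w z := by
    intro x y z w
    rw [ha2 x y z w, ha1 z w x y, ha2 w z x y]
  constructor
  · intro x y z w h
    have hb0 : α x y z w + α y z x w + α z x y w = 0 := by
      rcases h with h | h | h | h | h | h
      · subst h
        have e1 : α x x z w = 0 := by have := ha1 x x z w; linarith
        have e2 : α z x x w = - α x z x w := by have := ha1 z x x w; linarith
        linarith
      · subst h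
        have e1 : α x x y w = 0 := by have := ha1 x x y w; linarith
        have e2 : α y x x w = - α x y x w := by have := ha1 y x x w; linarith
        linarith
      · subst h
        have e1 : α y z x x = 0 := by have := ha3 y z x x; linarith
        have e2 : α x y z x = α z x x y := ha2 x y z x
        have e3 : α z x y x = - α z x x y := by have := ha3 z x y x; linarith
        have e4 : α y z x x = α x y z x + α z x y x := by
          rw [e2] at *; linarith
        linarith
      · subst h
        have e1 : α y y x w = 0 := by have := ha1 y y x w; linarith
        have e2 : α x y y w = - α y x y w := ha1 x y y w
        linarith
      · subst h
        have e1 : α z x y y = 0 := by have := ha3 z x y y; linarith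
        have e2 : α y z x y = α x y y z := ha2 y z x y
        have e3 : α x y z y = - α x y y z := by have := ha3 x y z y; linarith
        linarith
      · subst h
        have e1 : α x y z z = 0 := by have := ha3 x y z z; linarith
        have e2 : α y z x z = α x z y z := ha2 y z x z
        have e3 : α z x y z = α y z z x := ha2 z x y z
        have e4 : α y z z x = - α y z x z := by have := ha3 y z z x; linarith
        have e5 : α y z x z = α x z y z := e2
        linarith [ha2 y z x z]
    have hω0 : ωbar (x : V) y z w = 0 := by
      apply hωalt
      rcases h with h | h | h | h | h | h <;>
        simp [h]
    simp only [bianchi, hω0]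
    linarith
  · intro m X Y
    have key : ∀ i j : Fin m,
        ((Rbar (X i : V) (Y i : V) (X j : V) (Y j : V) + 3 * α (X i) (Y i) (X j) (Y j)
          - 3 * bianchi α (X i) (Y i) (X j) (Y j))
        + (ωbar (X i : V) (Y i : V) (X j : V) (Y j : V)
          + 3 * bianchi α (X i) (Y i) (X j) (Y j)))
        = (Rbar (X i : V) (Y i : V) (X j : V) (Y j : V)
            + ωbar (X i : V) (Y i : V) (X j : V) (Y j : V))
          + 3 * α (X i) (Y i) (X j) (Y j) := by
      intro i j; ring
    calc (0 : ℝ) ≤ (∑ i, ∑ j, (Rbar (X i : V) (Y i : V) (X j : V) (Y j : V)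
            + ωbar (X i : V) (Y i : V) (X j : V) (Y j : V)))
          + 3 * ∑ i, ∑ j, α (X i) (Y i) (X j) (Y j) := by
          have h1 := hpsd m (fun i => (X i : V)) (fun i => (Y i : V))
          have h2 := hαpsd m X Y
          simp only at h1
          linarith
      _ = _ := by
          rw [Finset.mul_sum]
          rw [← Finset.sum_add_distrib]
          refine Finset.sum_congr rfl fun i _ => ?_
          rw [Finset.mul_sum, ← Finset.sum_add_distrib]
          exact Finset.sum_congr rfl fun j _ => (key i j).symm
end

section
/- Let V₁ and V₂ be real vector spaces, and for i = 1,2 let T_i be a quadrilinear form on V_i with curvature symmetries and ω_i an alternating quadrilinear form on V_i such that T_i + ω_i is positive semidefinite on ∧²V_i. On V = V₁ × V₂ define T(X,Y,Z,W) = T₁(X₁,Y₁,Z₁,W₁) + T₂(X₂,Y₂,Z₂,W₂) and ω(X,Y,Z,W) = ω₁(X₁,Y₁,Z₁,W₁) + ω₂(X₂,Y₂,Z₂,W₂), where subscripts 1 and 2 denote the components of vectors of V. Then T has curvature symmetries, ω is alternating, and T + ω is positive semidefinite on ∧²V. (T is the curvature form of a Riemannian product metric; hence products preserve strongly nonnegative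 curvature.) -/
/-! The forms on `V₁ × V₂` are sums of pullbacks of the forms on the factors along the two
projections, and each of the three properties is preserved both by pulling back along an
arbitrary map and by adding two forms. -/

section FormPullbackAdd

variable {V W : Type*}

theorem HasCurvatureSymmetries.comp {T : W → W → W → W → ℝ} (hT : HasCurvatureSymmetries T)
    (f : V → W) : HasCurvatureSymmetries fun x y z w => T (f x) (f y) (f z) (f w) :=
  ⟨fun _ _ _ _ => hT.1 _ _ _ _, fun _ _ _ _ => hT.2 _ _ _ _⟩

theorem HasCurvatureSymmetries.add {T T' : V → V → V → V → ℝ} (hT : HasCurvatureSymmetries T)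
    (hT' : HasCurvatureSymmetries T') :
    HasCurvatureSymmetries fun x y z w => T x y z w + T' x y z w := by
  refine ⟨fun x y z w => ?_, fun x y z w => ?_⟩ <;> beta_reduce
  · rw [hT.1, hT'.1, neg_add]
  · rw [hT.2, hT'.2]

theorem IsAlternating4.comp {ω : W → W → W → W → ℝ} (hω : IsAlternating4 ω) (f : V → W) :
    IsAlternating4 fun x y z w => ω (f x) (f y) (f z) (f w) := by
  intro x₁ x₂ x₃ x₄ h
  apply hω
  rcases h with h | h | h | h | h | h <;> simp [h]

theorem IsAlternating4.add {ω ω' : V → V → V → V → ℝ} (hω : IsAlternating4 ω)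
    (hω' : IsAlternating4 ω') : IsAlternating4 fun x y z w => ω x y z w + ω' x y z w :=
  fun x₁ x₂ x₃ x₄ h => by beta_reduce; rw [hω _ _ _ _ h, hω' _ _ _ _ h, add_zero]

theorem PosSemidefWedge.comp {T : W → W → W → W → ℝ} (hT : PosSemidefWedge T) (f : V → W) :
    PosSemidefWedge fun x y z w => T (f x) (f y) (f z) (f w) :=
  fun m X Y => hT m (f ∘ X) (f ∘ Y)

theorem PosSemidefWedge.add {T T' : V → V → V → V → ℝ} (hT : PosSemidefWedge T)
    (hT' : PosSemidefWedge T') : PosSemidefWedge fun x y z w => T x y z w + T' x y z w := by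
  intro m X Y
  simp only [Finset.sum_add_distrib]
  exact add_nonneg (hT m X Y) (hT' m X Y)

end FormPullbackAdd

theorem product_preserves_strongly_nonneg_general
    {V₁ V₂ : Type*}
    (T₁ ω₁ : V₁ → V₁ → V₁ → V₁ → ℝ) (T₂ ω₂ : V₂ → V₂ → V₂ → V₂ → ℝ)
    (hT₁sym : HasCurvatureSymmetries T₁)
    (hω₁alt : IsAlternating4 ω₁)
    (hpsd₁ : PosSemidefWedge (fun x y z w => T₁ x y z w + ω₁ x y z w))
    (hT₂sym : HasCurvatureSymmetries T₂)
    (hω₂alt : IsAlternating4 ω₂)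
    (hpsd₂ : PosSemidefWedge (fun x y z w => T₂ x y z w + ω₂ x y z w)) :
    HasCurvatureSymmetries (fun X Y Z W : V₁ × V₂ =>
      T₁ X.1 Y.1 Z.1 W.1 + T₂ X.2 Y.2 Z.2 W.2) ∧
    IsAlternating4 (fun X Y Z W : V₁ × V₂ =>
      ω₁ X.1 Y.1 Z.1 W.1 + ω₂ X.2 Y.2 Z.2 W.2) ∧
    PosSemidefWedge (fun X Y Z W : V₁ × V₂ =>
      (T₁ X.1 Y.1 Z.1 W.1 + T₂ X.2 Y.2 Z.2 W.2)
      + (ω₁ X.1 Y.1 Z.1 W.1 + ω₂ X.2 Y.2 Z.2 W.2)) := by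
  refine ⟨(hT₁sym.comp Prod.fst).add (hT₂sym.comp Prod.snd),
    (hω₁alt.comp Prod.fst).add (hω₂alt.comp Prod.snd), ?_⟩
  have hpsd := (hpsd₁.comp Prod.fst).add (hpsd₂.comp Prod.snd)
  convert hpsd using 5
  exact add_add_add_comm ..

/-- products preserve strongly nonnegative curvature: if `T_i + ω_i` is
positive semidefinite on `∧²V_i` for `i = 1, 2`, then on `V = V₁ × V₂` the sum form
`T(X,Y,Z,W) = T₁(X₁,Y₁,Z₁,W₁) + T₂(X₂,Y₂,Z₂,W₂)` has curvature symmetries, the sum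
form `ω` is alternating, and `T + ω` is positive semidefinite on `∧²V`. -/
theorem product_preserves_strongly_nonneg
    {V₁ V₂ : Type*} [AddCommGroup V₁] [Module ℝ V₁] [AddCommGroup V₂] [Module ℝ V₂]
    (T₁ ω₁ : V₁ → V₁ → V₁ → V₁ → ℝ) (T₂ ω₂ : V₂ → V₂ → V₂ → V₂ → ℝ)
    (hT₁quad : IsQuadrilinear T₁) (hT₁sym : HasCurvatureSymmetries T₁)
    (hω₁quad : IsQuadrilinear ω₁) (hω₁alt : IsAlternating4 ω₁)
    (hpsd₁ : PosSemidefWedge (fun x y z w => T₁ x y z w + ω₁ x y z w))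
    (hT₂quad : IsQuadrilinear T₂) (hT₂sym : HasCurvatureSymmetries T₂)
    (hω₂quad : IsQuadrilinear ω₂) (hω₂alt : IsAlternating4 ω₂)
    (hpsd₂ : PosSemidefWedge (fun x y z w => T₂ x y z w + ω₂ x y z w)) :
    HasCurvatureSymmetries (fun X Y Z W : V₁ × V₂ =>
      T₁ X.1 Y.1 Z.1 W.1 + T₂ X.2 Y.2 Z.2 W.2) ∧
    IsAlternating4 (fun X Y Z W : V₁ × V₂ =>
      ω₁ X.1 Y.1 Z.1 W.1 + ω₂ X.2 Y.2 Z.2 W.2) ∧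
    PosSemidefWedge (fun X Y Z W : V₁ × V₂ =>
      (T₁ X.1 Y.1 Z.1 W.1 + T₂ X.2 Y.2 Z.2 W.2)
      + (ω₁ X.1 Y.1 Z.1 W.1 + ω₂ X.2 Y.2 Z.2 W.2)) :=
  product_preserves_strongly_nonneg_general T₁ ω₁ T₂ ω₂ hT₁sym hω₁alt hpsd₁ hT₂sym hω₂alt hpsd₂
end
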